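/- arXiv:1604.04381 — 2 statements merged into one kernel-verified Lean document; each statement's English description precedes it below -/
import Mathlib

section
/- For the matrices Ã = (1/√2)·[[1, -i],[1, i]] and a vector a = (e^{iα/2}, e^{-iα/2})ᵀ, and R = (1/(2y))·[[1,-x],[-x,x²+y²]] with y > 0, one has (Ã*a)* R (Ã*a) = |e^{iα} - γ|² / (1 - |γ|²), where γ = (x + iy - i)/(x + iy + i). -/
/-! With `z = x + iy`, `c = cos (α/2)`, `s = sin (α/2)`, both sides equal `|c + s z|² / y`.
On the left, `Ã* a = √2 (c, -s)` is a real vector and `R` is the matrix of the quadratic form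
`(p, q) ↦ |p - q z|² / (2y)`. On the right, `e^{iα} (z + i) - (z - i) = 2i e^{iα/2} (c + s z)`
and `1 - |γ|² = 4y / |z + i|²`. -/

open Complex Matrix ComplexConjugate

theorem cayley_conjTranspose_mulVec_conj (u : ℂ) :
    (((1 / Real.sqrt 2 : ℝ) : ℂ) • !![1, -I; 1, I])ᴴ *ᵥ ![u, conj u] =
      ![((Real.sqrt 2 * u.re : ℝ) : ℂ), ((-(Real.sqrt 2 * u.im) : ℝ) : ℂ)] := by
  ext i
  fin_cases i <;>
    simp [mulVec, dotProduct, Fin.sum_univ_two, Complex.ext_iff] <;>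
    field_simp <;> ring

theorem quadForm_ofReal_eq_norm_sub_mul_sq (x y p q : ℝ) :
    star ![(p : ℂ), q] ⬝ᵥ
        ((((1 / (2 * y) : ℝ) : ℂ) • !![1, -(x : ℂ); -(x : ℂ), (x : ℂ) ^ 2 + (y : ℂ) ^ 2]) *ᵥ
          ![(p : ℂ), q]) =
      ((‖(p : ℂ) - q * (x + y * I)‖ ^ 2 / (2 * y) : ℝ) : ℂ) := by
  rw [Complex.sq_norm, Complex.normSq_apply]
  simp [mulVec, dotProduct, Fin.sum_univ_two]
  ring

theorem one_sub_norm_cayley_sq {z : ℂ} (hz : z + I ≠ 0) :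
    1 - ‖(z - I) / (z + I)‖ ^ 2 = 4 * z.im / ‖z + I‖ ^ 2 := by
  have : ‖z + I‖ ^ 2 ≠ 0 := by positivity
  rw [norm_div, div_pow, one_sub_div this]
  simp only [Complex.sq_norm, Complex.normSq_apply]
  congr 1
  simp
  ring

theorem sq_mul_add_I_sub_sub_I_of_norm_eq_one {u : ℂ} (hu : ‖u‖ = 1) (z : ℂ) :
    u ^ 2 * (z + I) - (z - I) = 2 * I * u * (u.re + u.im * z) := by
  have h : u.re * u.re + u.im * u.im = 1 := by
    rw [← Complex.normSq_apply, ← Complex.sq_norm, hu, one_pow]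
  apply Complex.ext <;> simp [pow_two]
  · linear_combination z.re * h
  · linear_combination (z.im - 1) * h

theorem norm_sq_sub_cayley_div_one_sub {u z : ℂ} (hu : ‖u‖ = 1) (hz : 0 < z.im) :
    ‖u ^ 2 - (z - I) / (z + I)‖ ^ 2 / (1 - ‖(z - I) / (z + I)‖ ^ 2) =
      ‖(u.re : ℂ) + u.im * z‖ ^ 2 / z.im := by
  have hzI : z + I ≠ 0 := fun h => by
    have him := congrArg Complex.im h
    simp only [add_im, I_im, zero_im] at him
    linarith
  have hsub : u ^ 2 - (z - I) / (z + I) = 2 * I * u * (u.re + u.im * z) / (z + I) := by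
    rw [← sq_mul_add_I_sub_sub_I_of_norm_eq_one hu, eq_div_iff hzI, sub_mul, div_mul_cancel₀ _ hzI]
  rw [hsub, one_sub_norm_cayley_sq hzI, norm_div, norm_mul, norm_mul, norm_mul, hu]
  have hnorm : ‖z + I‖ ≠ 0 := norm_ne_zero_iff.mpr hzI
  simp only [norm_I, Complex.norm_ofNat]
  field_simp
  ring

/-- For `Ã = (1/√2)·[[1,-i],[1,i]]`, `a = (e^{iα/2}, e^{-iα/2})ᵀ` and
`R = (1/(2y))·[[1,-x],[-x,x²+y²]]`, one has
`(Ã*a)* R (Ã*a) = |e^{iα} - γ|²/(1-|γ|²)` where `γ = (x+iy-i)/(x+iy+i)`. -/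
theorem cayley_quadratic_form (x y α : ℝ) (hy : 0 < y) :
    let Atil : Matrix (Fin 2) (Fin 2) ℂ :=
      ((1 / Real.sqrt 2 : ℝ) : ℂ) • !![1, -I; 1, I]
    let a : Fin 2 → ℂ := ![Complex.exp (α / 2 * I), Complex.exp (-(α / 2) * I)]
    let R : Matrix (Fin 2) (Fin 2) ℂ :=
      ((1 / (2 * y) : ℝ) : ℂ) • !![1, -(x : ℂ); -(x : ℂ), (x : ℂ) ^ 2 + (y : ℂ) ^ 2]
    let γ : ℂ := (x + y * I - I) / (x + y * I + I)
    let v : Fin 2 → ℂ := Atilᴴ *ᵥ a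
    star v ⬝ᵥ (R *ᵥ v) =
      ((‖Complex.exp (α * I) - γ‖ ^ 2 /
        (1 - ‖γ‖ ^ 2) : ℝ) : ℂ) := by
  intro Atil a R γ v
  set u := Complex.exp (α / 2 * I)
  have hu : ‖u‖ = 1 := by simpa using Complex.norm_exp_ofReal_mul_I (α / 2)
  have ha : a = ![u, conj u] := by
    simp only [a, u, ← Complex.exp_conj, map_mul, map_div₀, Complex.conj_ofReal, map_ofNat,
      Complex.conj_I, mul_neg, neg_mul]
  have hexp : Complex.exp (α * I) = u ^ 2 := by
    rw [← Complex.exp_nat_mul]; push_cast; ring_nf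
  have hv : v = ![((Real.sqrt 2 * u.re : ℝ) : ℂ), ((-(Real.sqrt 2 * u.im) : ℝ) : ℂ)] := by
    rw [← cayley_conjTranspose_mulVec_conj, ← ha]
  have hnorm :
      ‖((Real.sqrt 2 * u.re : ℝ) : ℂ) - ((-(Real.sqrt 2 * u.im) : ℝ) : ℂ) * (x + y * I)‖ ^ 2
        = 2 * ‖(u.re : ℂ) + u.im * (x + y * I)‖ ^ 2 := by
    rw [show ((Real.sqrt 2 * u.re : ℝ) : ℂ) - ((-(Real.sqrt 2 * u.im) : ℝ) : ℂ) * (x + y * I)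
        = ((Real.sqrt 2 : ℝ) : ℂ) * (u.re + u.im * (x + y * I)) by push_cast; ring,
      norm_mul, mul_pow, Complex.norm_real, Real.norm_eq_abs, sq_abs, Real.sq_sqrt zero_le_two]
  rw [hv, quadForm_ofReal_eq_norm_sub_mul_sq, hexp,
    norm_sq_sub_cayley_div_one_sub hu (by simpa using hy), hnorm,
    show ((x : ℂ) + y * I).im = y by simp]
  field_simp
end

section
/- If b, γ ∈ ℂ with |b| < 1, b ≠ 1 and γ̄ ≠ 1, then the product [[1/(1-γ),-γ/(1-γ)],[-γ̄/(1-γ̄),1/(1-γ̄)]] · [[1/(1-b),-b/(1-b)],[-b̄/(1-b̄),1/(1-b̄)]] equals [[1/(1-b'),-b'/(1-b')],[-b̄'/(1-b̄'),1/(1-b̄')]], where b' = (b + γ(1-b)/(1-b̄)) / (1 + b̄γ(1-b)/(1-b̄)), provided all denominators are nonzero. -/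
open Matrix

/-- The matrix of the modified Szegő recursion with parameter `γ`. -/
noncomputable def Atil (γ : ℂ) : Matrix (Fin 2) (Fin 2) ℂ :=
  !![1 / (1 - γ), -γ / (1 - γ);
     -(starRingEnd ℂ γ) / (1 - starRingEnd ℂ γ), 1 / (1 - starRingEnd ℂ γ)]

set_option maxHeartbeats 1000000 in
/-- Composition law for deformed Szegő matrices:
`Ã(γ)·Ã(b) = Ã(b')` with `b' = (b + γ(1-b)/(1-b̄))/(1 + b̄γ(1-b)/(1-b̄))`,
provided all denominators are nonzero. -/
theorem deformed_szego_composition (b γ : ℂ) (hb : ‖b‖ < 1)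
    (hb1 : b ≠ 1) (hγc : starRingEnd ℂ γ ≠ 1) (hγ : γ ≠ 1)
    (hden : 1 + starRingEnd ℂ b * (γ * (1 - b) / (1 - starRingEnd ℂ b)) ≠ 0)
    (hb' : (b + γ * (1 - b) / (1 - starRingEnd ℂ b)) /
        (1 + starRingEnd ℂ b * (γ * (1 - b) / (1 - starRingEnd ℂ b))) ≠ 1)
    (hb'c : starRingEnd ℂ ((b + γ * (1 - b) / (1 - starRingEnd ℂ b)) /
        (1 + starRingEnd ℂ b * (γ * (1 - b) / (1 - starRingEnd ℂ b)))) ≠ 1) :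
    Atil γ * Atil b =
      Atil ((b + γ * (1 - b) / (1 - starRingEnd ℂ b)) /
        (1 + starRingEnd ℂ b * (γ * (1 - b) / (1 - starRingEnd ℂ b)))) := by
  have hbc1 : starRingEnd ℂ b ≠ 1 := by
    intro h
    apply hb1
    have := congrArg (starRingEnd ℂ) h
    simpa using this
  have hA : (1 : ℂ) - γ ≠ 0 := sub_ne_zero.mpr (Ne.symm hγ)
  have hB : (1 : ℂ) - starRingEnd ℂ γ ≠ 0 := sub_ne_zero.mpr (Ne.symm hγc)
  have hC : (1 : ℂ) - b ≠ 0 := sub_ne_zero.mpr (Ne.symm hb1)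
  have hD : (1 : ℂ) - starRingEnd ℂ b ≠ 0 := sub_ne_zero.mpr (Ne.symm hbc1)
  -- flat numerator and denominator
  have hQfac : (1 - starRingEnd ℂ b) + starRingEnd ℂ b * (γ * (1 - b)) =
      (1 - starRingEnd ℂ b) *
      (1 + starRingEnd ℂ b * (γ * (1 - b) / (1 - starRingEnd ℂ b))) := by
    field_simp
  have hQ : (1 - starRingEnd ℂ b) + starRingEnd ℂ b * (γ * (1 - b)) ≠ 0 := by
    rw [hQfac]; exact mul_ne_zero hD hden
  have hQc : (1 - b) + b * (starRingEnd ℂ γ * (1 - starRingEnd ℂ b)) ≠ 0 := by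
    intro h
    apply hQ
    have := congrArg (starRingEnd ℂ) h
    simpa using this
  have hb'PQ : (b + γ * (1 - b) / (1 - starRingEnd ℂ b)) /
      (1 + starRingEnd ℂ b * (γ * (1 - b) / (1 - starRingEnd ℂ b))) =
      (b * (1 - starRingEnd ℂ b) + γ * (1 - b)) /
      ((1 - starRingEnd ℂ b) + starRingEnd ℂ b * (γ * (1 - b))) := by
    rw [div_eq_div_iff hden hQ]
    field_simp
    try ring
  rw [hb'PQ]
  have hPQc : starRingEnd ℂ ((b * (1 - starRingEnd ℂ b) + γ * (1 - b)) /
      ((1 - starRingEnd ℂ b) + starRingEnd ℂ b * (γ * (1 - b)))) =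
      (starRingEnd ℂ b * (1 - b) + starRingEnd ℂ γ * (1 - starRingEnd ℂ b)) /
      ((1 - b) + b * (starRingEnd ℂ γ * (1 - starRingEnd ℂ b))) := by
    simp only [map_div₀, map_add, _root_.map_mul, map_sub, _root_.map_one, Complex.conj_conj]
  have h1b' : 1 - (b * (1 - starRingEnd ℂ b) + γ * (1 - b)) /
      ((1 - starRingEnd ℂ b) + starRingEnd ℂ b * (γ * (1 - b))) =
      ((1 - b) * (1 - starRingEnd ℂ b) * (1 - γ)) /
      ((1 - starRingEnd ℂ b) + starRingEnd ℂ b * (γ * (1 - b))) := by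
    rw [eq_div_iff hQ, sub_mul, div_mul_cancel₀ _ hQ]
    ring
  have h1b'c : 1 - (starRingEnd ℂ b * (1 - b) + starRingEnd ℂ γ * (1 - starRingEnd ℂ b)) /
      ((1 - b) + b * (starRingEnd ℂ γ * (1 - starRingEnd ℂ b))) =
      ((1 - b) * (1 - starRingEnd ℂ b) * (1 - starRingEnd ℂ γ)) /
      ((1 - b) + b * (starRingEnd ℂ γ * (1 - starRingEnd ℂ b))) := by
    rw [eq_div_iff hQc, sub_mul, div_mul_cancel₀ _ hQc]
    ring
  have hden1 : ((1 : ℂ) - b) * (1 - starRingEnd ℂ b) * (1 - γ) ≠ 0 :=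
    mul_ne_zero (mul_ne_zero hC hD) hA
  have hden2 : ((1 : ℂ) - b) * (1 - starRingEnd ℂ b) * (1 - starRingEnd ℂ γ) ≠ 0 :=
    mul_ne_zero (mul_ne_zero hC hD) hB
  have hQ' : 1 - starRingEnd ℂ b + γ * (1 - b) * starRingEnd ℂ b ≠ 0 := by
    intro h; apply hQ; linear_combination h
  have hQc' : 1 - b + starRingEnd ℂ γ * b * (1 - starRingEnd ℂ b) ≠ 0 := by
    intro h; apply hQc; linear_combination h
  ext i j
  fin_cases i <;> fin_cases j <;>
    simp only [Atil, Matrix.mul_apply, Fin.sum_univ_two, Matrix.cons_val', Matrix.cons_val_zero,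
      Matrix.cons_val_one, Matrix.head_cons, Matrix.head_fin_const, Matrix.empty_val',
      Matrix.cons_val_fin_one, hPQc, h1b', h1b'c, Matrix.of_apply, Fin.zero_eta, Fin.mk_one] <;>
    · field_simp [hQ', hQc']
      all_goals ring
end
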